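/- arXiv:1912.03890 — 3 statements merged into one kernel-verified Lean document; each statement's English description precedes it below -/
import Mathlib

section
/- Let T be a directed spanning tree on vertex set {1,...,m} rooted at vertex q with all arcs oriented away from q, and let ρ_i denote the unique parent of each vertex i ≠ q. Choose real numbers v_1,...,v_m with v_q = 0 and the v_i pairwise distinct and nonzero for i ≠ q. Define the m×m matrix G by g_ii = v_i, g_{i,ρ_i} = -v_i for i ≠ q, and g_ij = 0 otherwise. Then for every complex number s and every vector x ∈ ℂ^m satisfying Gᵀx = s x and x_q = 0, we have x = 0; consequently (G, e_q) is a controllable pair. -/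
/-!
Read coordinatewise, `Gᵀ x = s x` says that `(v j - s) x j` is the sum of `v i x i` over the
children `i` of `j`. A vertex `i₀` of maximal depth in the support of `x` has no child in the
support, which forces `s = v i₀`; as the `v i` are distinct, every other vertex of the support has
a child in the support, so the support lies on the path from `i₀` to the root. Its topmost vertex
`j ≠ q` is then the only child of `ρ j` in the support, and the equation at `ρ j` reads
`v j x j = 0`.

Controllability is the Hautus argument: a nonzero vector orthogonal to every `G ^ k e_q` generates
a nonzero `Gᵀ`-invariant subspace orthogonal to `e_q`, and over `ℂ` that subspace contains an
eigenvector of `Gᵀ`.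
-/

open Matrix

/-- The controllability matrix `[b, Gb, ..., G^(m-1) b]`. -/
noncomputable def ctrbVec {m : ℕ} (G : Matrix (Fin m) (Fin m) ℝ) (b : Fin m → ℝ) :
    Matrix (Fin m) (Fin m) ℝ :=
  fun i k => (G ^ (k : ℕ) *ᵥ b) i

namespace RootedTree

variable {ι : Type*} {ρ : ι → ι} {q : ι}

theorem parent_ne_self (hρ : ∀ i, ∃ k, ρ^[k] i = q) {i : ι} (hi : i ≠ q) : ρ i ≠ i :=
  fun h => by
    obtain ⟨k, hk⟩ := hρ i
    exact hi (Function.iterate_fixed h k ▸ hk)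

variable [DecidableEq ι] (hρ : ∀ i, ∃ k, ρ^[k] i = q)

noncomputable def depth (i : ι) : ℕ := Nat.find (hρ i)

variable {i j : ι}

theorem iterate_depth : ρ^[depth hρ i] i = q := Nat.find_spec (hρ i)

theorem depth_le {k : ℕ} (h : ρ^[k] i = q) : depth hρ i ≤ k := Nat.find_min' (hρ i) h

theorem depth_eq_zero_iff : depth hρ i = 0 ↔ i = q := Nat.find_eq_zero (hρ i)

theorem depth_eq_depth_parent_add_one (hi : i ≠ q) : depth hρ i = depth hρ (ρ i) + 1 := by
  obtain ⟨n, hn⟩ := Nat.exists_eq_succ_of_ne_zero ((depth_eq_zero_iff hρ).not.mpr hi)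
  have h₁ : depth hρ (ρ i) ≤ n := depth_le hρ (by rw [← iterate_depth hρ (i := i), hn]; rfl)
  have h₂ : depth hρ i ≤ depth hρ (ρ i) + 1 := depth_le hρ (iterate_depth hρ)
  omega

variable [Fintype ι]

variable (ρ q) in
def children (j : ι) : Finset ι := {i | i ≠ q ∧ ρ i = j}

theorem mem_children : i ∈ children ρ q j ↔ i ≠ q ∧ ρ i = j := by simp [children]

theorem depth_of_mem_children (h : i ∈ children ρ q j) : depth hρ i = depth hρ j + 1 := by
  obtain ⟨hi, rfl⟩ := mem_children.mp h
  exact depth_eq_depth_parent_add_one hρ hi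

section Eigenvector

variable {K : Type*} [Field K] {v : ι → K} {s : K} {x : ι → K}

theorem sub_mul_eq_zero_of_forall_depth_le
    (hx : ∀ j, (v j - s) * x j = ∑ i ∈ children ρ q j, v i * x i) {i₀ : ι}
    (hmax : ∀ i, x i ≠ 0 → depth hρ i ≤ depth hρ i₀) (hj : depth hρ i₀ ≤ depth hρ j) :
    (v j - s) * x j = 0 := by
  rw [hx]
  refine Finset.sum_eq_zero fun i hi => ?_
  have := depth_of_mem_children hρ hi
  have hxi : x i = 0 := by by_contra hxi; have := hmax i hxi; omega
  rw [hxi, mul_zero]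

theorem eq_iterate_of_ne_zero
    (hx : ∀ j, (v j - s) * x j = ∑ i ∈ children ρ q j, v i * x i)
    (hv : Function.Injective v) {i₀ : ι} (hs : v i₀ = s)
    (hmax : ∀ i, x i ≠ 0 → depth hρ i ≤ depth hρ i₀) (r : ℕ) {j : ι} (hj : x j ≠ 0)
    (hr : depth hρ j + r = depth hρ i₀) : j = ρ^[r] i₀ := by
  induction r generalizing j with
  | zero =>
    have := sub_mul_eq_zero_of_forall_depth_le hρ hx hmax hr.ge
    exact hv (sub_eq_zero.mp ((mul_eq_zero.mp this).resolve_right hj) |>.trans hs.symm)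
  | succ r ih =>
    have hvj : v j ≠ s := fun h => by
      obtain rfl := hv (h.trans hs.symm)
      omega
    obtain ⟨i, hi, hvi⟩ := Finset.exists_ne_zero_of_sum_ne_zero
      (hx j ▸ mul_ne_zero (sub_ne_zero.mpr hvj) hj)
    have hdi := depth_of_mem_children hρ hi
    obtain ⟨-, rfl⟩ := mem_children.mp hi
    rw [Function.iterate_succ_apply', ← ih (right_ne_zero_of_mul hvi) (by omega)]

theorem eq_zero_of_sub_mul_eq_sum_children (hρ : ∀ i, ∃ k, ρ^[k] i = q)
    (hx : ∀ j, (v j - s) * x j = ∑ i ∈ children ρ q j, v i * x i)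
    (hv : Function.Injective v) (hv₀ : ∀ i, i ≠ q → v i ≠ 0) (hxq : x q = 0) : x = 0 := by
  classical
  by_contra hne
  have hS : ({i | x i ≠ 0} : Finset ι).Nonempty := by
    simpa [Finset.filter_nonempty_iff, funext_iff] using hne
  obtain ⟨i₀, hi₀, hmax⟩ := Finset.exists_max_image _ (depth hρ) hS
  obtain ⟨j, hj, hmin⟩ := Finset.exists_min_image _ (depth hρ) hS
  simp only [Finset.mem_filter, Finset.mem_univ, true_and] at hi₀ hj hmax hmin
  have hs : v i₀ = s := sub_eq_zero.mp <| (mul_eq_zero.mp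
    (sub_mul_eq_zero_of_forall_depth_le hρ hx hmax le_rfl)).resolve_right hi₀
  have hjq : j ≠ q := by rintro rfl; exact hj hxq
  have hdj := depth_eq_depth_parent_add_one hρ hjq
  have hxp : x (ρ j) = 0 := by by_contra h; have := hmin _ h; omega
  -- the support of `x` is contained in the path from `i₀` to the root
  have hunique : ∀ i, x i ≠ 0 → depth hρ i = depth hρ j → i = j := fun i hi hij =>
    have := hmax j hj
    (eq_iterate_of_ne_zero hρ hx hv hs hmax (depth hρ i₀ - depth hρ j) hi (by omega)).trans
      (eq_iterate_of_ne_zero hρ hx hv hs hmax _ hj (by omega)).symm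
  have hp := hx (ρ j)
  rw [hxp, mul_zero, Finset.sum_eq_single_of_mem j (mem_children.mpr ⟨hjq, rfl⟩)] at hp
  · exact mul_ne_zero (hv₀ j hjq) hj hp.symm
  · intro i hi hij
    by_contra h
    have := depth_of_mem_children hρ hi
    exact hij (hunique i (right_ne_zero_of_mul h) (by omega))

end Eigenvector

end RootedTree

section TreeMatrix

open RootedTree

variable {ι R : Type*} [DecidableEq ι] {ρ : ι → ι} {q : ι}

variable (ρ q) in
def treeMatrix [Ring R] (v : ι → R) : Matrix ι ι R :=
  fun i j => if i = j then v i else if i ≠ q ∧ j = ρ i then -v i else 0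

theorem treeMatrix_map {S : Type*} [Ring R] [Ring S] (f : R →+* S) (v : ι → R) :
    (treeMatrix ρ q v).map f = treeMatrix ρ q (f ∘ v) := by
  ext i j
  simp only [treeMatrix, map_apply, Function.comp_apply]
  split_ifs <;> simp

variable [Fintype ι]

theorem transpose_treeMatrix_mulVec_apply [Ring R] (hρ : ∀ i, ∃ k, ρ^[k] i = q) (v x : ι → R)
    (j : ι) : ((treeMatrix ρ q v)ᵀ *ᵥ x) j = v j * x j - ∑ i ∈ children ρ q j, v i * x i := by
  have hentry : ∀ i, treeMatrix ρ q v i j * x i =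
      (if i = j then v i * x i else 0) - if i ∈ children ρ q j then v i * x i else 0 := by
    intro i
    simp only [mem_children, treeMatrix]
    by_cases hij : i = j
    · subst hij
      have : ¬(i ≠ q ∧ ρ i = i) := fun h => parent_ne_self hρ h.1 h.2
      simp [this]
    · simp only [hij, if_false, eq_comm (a := j)]
      split_ifs <;> simp
  simp only [mulVec, dotProduct, transpose_apply, hentry, Finset.sum_sub_distrib,
    Finset.sum_ite_eq', Finset.mem_univ, if_true, Finset.sum_ite_mem, Finset.univ_inter]

theorem eq_zero_of_transpose_treeMatrix_mulVec_eq_smul {K : Type*} [Field K]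
    (hρ : ∀ i, ∃ k, ρ^[k] i = q) {v : ι → K} (hv : Function.Injective v)
    (hv₀ : ∀ i, i ≠ q → v i ≠ 0) {s : K} {x : ι → K}
    (hx : (treeMatrix ρ q v)ᵀ *ᵥ x = s • x) (hxq : x q = 0) : x = 0 := by
  refine eq_zero_of_sub_mul_eq_sum_children hρ (s := s) (fun j => ?_) hv hv₀ hxq
  have := congrFun hx j
  rw [transpose_treeMatrix_mulVec_apply hρ, Pi.smul_apply, smul_eq_mul] at this
  linear_combination this

end TreeMatrix

theorem Module.End.exists_eigenvector_mem {K V : Type*} [Field K] [IsAlgClosed K]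
    [AddCommGroup V] [Module K V] [FiniteDimensional K V] {f : Module.End K V}
    {p : Submodule K V} (hp : ∀ x ∈ p, f x ∈ p) (hne : p ≠ ⊥) :
    ∃ μ : K, ∃ x ∈ p, x ≠ 0 ∧ f x = μ • x := by
  have := Submodule.nontrivial_iff_ne_bot.mpr hne
  obtain ⟨μ, hμ⟩ := Module.End.exists_eigenvalue (f.restrict hp)
  obtain ⟨z, hz⟩ := hμ.exists_hasEigenvector
  exact ⟨μ, z, z.2, fun h => hz.2 (Subtype.ext h), congrArg Subtype.val hz.apply_eq_smul⟩

namespace Matrix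

variable {n : Type*} [Fintype n] [DecidableEq n]

open Polynomial in
theorem dotProduct_pow_mulVec_eq_zero_of_lt_card {R : Type*} [CommRing R] [Nontrivial R]
    {A : Matrix n n R} {b y : n → R} (hy : ∀ k < Fintype.card n, y ⬝ᵥ (A ^ k *ᵥ b) = 0)
    (k : ℕ) : y ⬝ᵥ (A ^ k *ᵥ b) = 0 := by
  cases isEmpty_or_nonempty n
  · simp [dotProduct]
  have hχ : A.charpoly ≠ 1 := fun h => by
    simpa [h] using (A.charpoly_natDegree_eq_dim).symm
  have hdeg : (X ^ k %ₘ A.charpoly).natDegree < Fintype.card n :=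
    A.charpoly_natDegree_eq_dim ▸ natDegree_modByMonic_lt _ A.charpoly_monic hχ
  rw [pow_eq_aeval_mod_charpoly, aeval_eq_sum_range' hdeg, sum_mulVec, dotProduct_sum]
  refine Finset.sum_eq_zero fun i hi => ?_
  rw [smul_mulVec, dotProduct_smul, hy i (Finset.mem_range.mp hi), smul_zero]

theorem eq_zero_of_forall_dotProduct_pow_mulVec_eq_zero {K : Type*} [Field K] [IsAlgClosed K]
    {A : Matrix n n K} {b : n → K} (hA : ∀ (s : K) x, Aᵀ *ᵥ x = s • x → x ⬝ᵥ b = 0 → x = 0)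
    {y : n → K} (hy : ∀ k : ℕ, y ⬝ᵥ (A ^ k *ᵥ b) = 0) : y = 0 := by
  let U : Submodule K (n → K) :=
    { carrier := {z | ∀ k : ℕ, z ⬝ᵥ (A ^ k *ᵥ b) = 0}
      add_mem' := fun hz hw k => by rw [add_dotProduct, hz k, hw k, add_zero]
      zero_mem' := fun k => zero_dotProduct _
      smul_mem' := fun c z hz k => by rw [smul_dotProduct, hz k, smul_zero] }
  have hU : ∀ z ∈ U, Aᵀ.mulVecLin z ∈ U := fun z hz k => by
    rw [mulVecLin_apply, mulVec_transpose, ← dotProduct_mulVec, mulVec_mulVec, ← pow_succ']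
    exact hz (k + 1)
  by_contra hne
  obtain ⟨μ, z, hzU, hz0, hz⟩ :=
    Module.End.exists_eigenvector_mem hU ((Submodule.ne_bot_iff U).mpr ⟨y, hy, hne⟩)
  exact hz0 (hA μ z hz (by simpa using hzU 0))

end Matrix

theorem rank_ctrbVec_eq {m : ℕ} {G : Matrix (Fin m) (Fin m) ℝ} {b : Fin m → ℝ}
    (h : ∀ (s : ℂ) (x : Fin m → ℂ),
      (G.map Complex.ofReal)ᵀ *ᵥ x = s • x → x ⬝ᵥ (Complex.ofReal ∘ b) = 0 → x = 0) :
    (ctrbVec G b).rank = m := by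
  suffices hdet : (ctrbVec G b).det ≠ 0 by
    rw [rank_of_isUnit _ ((isUnit_iff_isUnit_det _).mpr hdet.isUnit), Fintype.card_fin]
  intro hdet
  obtain ⟨y, hy0, hy⟩ := exists_vecMul_eq_zero_iff.mpr hdet
  have hyk : ∀ k : ℕ, y ⬝ᵥ (G ^ k *ᵥ b) = 0 :=
    dotProduct_pow_mulVec_eq_zero_of_lt_card fun k hk =>
      congrFun hy ⟨k, by simpa using hk⟩
  have hyC : Complex.ofReal ∘ y = 0 := eq_zero_of_forall_dotProduct_pow_mulVec_eq_zero h fun k => by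
    have hmap : Complex.ofRealHom ∘ (G ^ k *ᵥ b) =
        (G ^ k).map Complex.ofRealHom *ᵥ (Complex.ofRealHom ∘ b) :=
      funext (RingHom.map_mulVec _ _ _)
    have := congrArg Complex.ofRealHom (hyk k)
    rwa [RingHom.map_dotProduct, map_zero, hmap, Matrix.map_pow] at this
  exact hy0 (funext fun i => Complex.ofReal_injective (congrFun hyC i))

theorem stmt3_general {m : ℕ} (q : Fin m) (ρ : Fin m → Fin m)
    (htree : ∀ i, ∃ k, ρ^[k] i = q)
    (v : Fin m → ℝ) (hinj : Function.Injective v)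
    (hvnz : ∀ i, i ≠ q → v i ≠ 0)
    (G : Matrix (Fin m) (Fin m) ℝ)
    (hG : ∀ i j, G i j =
      if i = j then v i else if i ≠ q ∧ j = ρ i then -v i else 0) :
    (∀ (s : ℂ) (x : Fin m → ℂ),
        (G.map Complex.ofReal)ᵀ *ᵥ x = s • x → x q = 0 → x = 0) ∧
      (ctrbVec G (fun i => if i = q then 1 else 0)).rank = m := by
  have hGC : G.map Complex.ofReal = treeMatrix ρ q (Complex.ofReal ∘ v) := by
    rw [show G = treeMatrix ρ q v from Matrix.ext hG]
    exact treeMatrix_map Complex.ofRealHom v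
  have hker : ∀ (s : ℂ) (x : Fin m → ℂ),
      (G.map Complex.ofReal)ᵀ *ᵥ x = s • x → x q = 0 → x = 0 := fun s x hx hxq =>
    eq_zero_of_transpose_treeMatrix_mulVec_eq_smul htree (Complex.ofReal_injective.comp hinj)
      (fun i hi => Complex.ofReal_ne_zero.mpr (hvnz i hi)) (hGC ▸ hx) hxq
  refine ⟨hker, rank_ctrbVec_eq fun s x hx hxb => hker s x hx ?_⟩
  simpa [dotProduct, apply_ite] using hxb

/-- Given a directed spanning tree rooted at `q` (encoded by the parent map `ρ`,
under which every vertex reaches the root by iteration), and distinct values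
`v i` which vanish only at `q`, the matrix `G` with `g_ii = v i`,
`g_{i,ρ i} = -v i` (for `i ≠ q`) and zeros elsewhere satisfies: for every
complex `s`, any `x` with `Gᵀ x = s x` and `x q = 0` must be zero; consequently
`(G, e_q)` is a controllable pair. -/
theorem stmt3 {m : ℕ} (q : Fin m) (ρ : Fin m → Fin m)
    (htree : ∀ i, ∃ k, ρ^[k] i = q)
    (v : Fin m → ℝ) (hvq : v q = 0) (hinj : Function.Injective v)
    (hvnz : ∀ i, i ≠ q → v i ≠ 0)
    (G : Matrix (Fin m) (Fin m) ℝ)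
    (hG : ∀ i j, G i j =
      if i = j then v i else if i ≠ q ∧ j = ρ i then -v i else 0) :
    (∀ (s : ℂ) (x : Fin m → ℂ),
        (G.map Complex.ofReal)ᵀ *ᵥ x = s • x → x q = 0 → x = 0) ∧
      (ctrbVec G (fun i => if i = q then 1 else 0)).rank = m :=
  stmt3_general q ρ htree v hinj hvnz G hG
end

section
/- Under the hypotheses of the extension construction with local integrators of dimensions n_i satisfying the lower bound (n_i ≥ n − min rank of the fixed-mode pencil), and with a weakly connected neighbor graph, the extended system {Ā, B̄_i, C̄_i; m} has no fixed spectrum if and only if N_{m−s} ∩ s ≠ ∅ for every subset s ⊂ {1,...,m} satisfying rank [λI_n − A, B_s; C_{m−s}, 0] < n for some λ ∈ σ(A). -/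
open Matrix Complex

noncomputable section

variable {n m : ℕ}

/-- Fixed-mode pencil `[λI − A, B_s; C_{m−s}, 0]` of the original system, in a
rank-equivalent form: the columns of `B_i` for `i ∉ s` and the rows of `C_i`
for `i ∈ s` are set to zero (zero columns/rows do not affect the rank). -/
def pencil (p q : Fin m → ℕ)
    (A : Matrix (Fin n) (Fin n) ℝ)
    (B : ∀ i, Matrix (Fin n) (Fin (p i)) ℝ)
    (C : ∀ i, Matrix (Fin (q i)) (Fin n) ℝ)
    (lam : ℂ) (s : Finset (Fin m)) :
    Matrix (Fin n ⊕ Σ i, Fin (q i)) (Fin n ⊕ Σ i, Fin (p i)) ℂ :=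
  fromBlocks (lam • 1 - A.map ofReal)
    (fun r c => if c.1 ∈ s then ofReal ((B c.1) r c.2) else 0)
    (fun r c => if r.1 ∈ s then 0 else ofReal ((C r.1) r.2 c))
    0

/-- The block column `E_i` selecting the `i`-th integrator block. -/
def Eblk (nd : Fin m → ℕ) (i : Fin m) :
    Matrix (Σ j, Fin (nd j)) (Fin (nd i)) ℂ :=
  fun r c => if h : r.1 = i then (if h ▸ r.2 = c then 1 else 0) else 0

/-- The selector `E_t` (as a square matrix with identity blocks on positions in
`t` and zeros elsewhere; its rank is `Σ_{i ∈ t} n_i`). -/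
def Esel (nd : Fin m → ℕ) (t : Finset (Fin m)) :
    Matrix (Σ j, Fin (nd j)) (Σ j, Fin (nd j)) ℂ :=
  fun r c => if r = c ∧ r.1 ∈ t then 1 else 0

/-- `Ā = diag(A, 0)` of the extended system. -/
def Abar (nd : Fin m → ℕ) (A : Matrix (Fin n) (Fin n) ℝ) :
    Matrix (Fin n ⊕ Σ j, Fin (nd j)) (Fin n ⊕ Σ j, Fin (nd j)) ℂ :=
  fromBlocks (A.map ofReal) 0 0 0

/-- `B̄_i = diag(B_i, E_i)`. -/
def Bbar (p nd : Fin m → ℕ) (B : ∀ i, Matrix (Fin n) (Fin (p i)) ℝ) (i : Fin m) :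
    Matrix (Fin n ⊕ Σ j, Fin (nd j)) (Fin (p i) ⊕ Fin (nd i)) ℂ :=
  fromBlocks ((B i).map ofReal) 0 0 (Eblk nd i)

/-- `C̄_i = diag(C_i, E_{N_i}')`. -/
def Cbar (q nd : Fin m → ℕ) (C : ∀ i, Matrix (Fin (q i)) (Fin n) ℝ)
    (N : Fin m → Finset (Fin m)) (i : Fin m) :
    Matrix (Fin (q i) ⊕ Σ j, Fin (nd j)) (Fin n ⊕ Σ j, Fin (nd j)) ℂ :=
  fromBlocks ((C i).map ofReal) 0 0 (Esel nd (N i))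

/-- Fixed-mode pencil of the extended system (same zeroing convention for the
channel subset `s`). -/
def extPencil (p q nd : Fin m → ℕ)
    (A : Matrix (Fin n) (Fin n) ℝ)
    (B : ∀ i, Matrix (Fin n) (Fin (p i)) ℝ)
    (C : ∀ i, Matrix (Fin (q i)) (Fin n) ℝ)
    (N : Fin m → Finset (Fin m))
    (lam : ℂ) (s : Finset (Fin m)) :
    Matrix ((Fin n ⊕ Σ j, Fin (nd j)) ⊕ Σ i, (Fin (q i) ⊕ Σ j, Fin (nd j)))
      ((Fin n ⊕ Σ j, Fin (nd j)) ⊕ Σ i, (Fin (p i) ⊕ Fin (nd i))) ℂ :=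
  fromBlocks (lam • 1 - Abar nd A)
    (fun r c => if c.1 ∈ s then Bbar p nd B c.1 r c.2 else 0)
    (fun r c => if r.1 ∈ s then 0 else Cbar q nd C N r.1 r.2 c)
    0

end

/-!
After regrouping rows and columns, the pencil of the extended system is block diagonal: one block
is the pencil `P(λ, s)` of the original system, the other is the integrator pencil
`Y(λ, s) = [λI, E_s; E_{N_{m−s}}', 0]`, which does not involve `A`. Since `E_s` is idempotent and,
because `i ∈ N_i`, the state of every channel `i ∉ s` is read off its own selector `E_{N_i}'`, block
elimination clears the `λI` block of `Y`, so `rank Y = rank E_s + rank E_{N_{m−s}}'`, that is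
`Σ_i n_i + Σ_{j ∈ N_{m−s} ∩ s} n_j`. Hence the extended system has no fixed mode iff
`n ≤ rank P(λ, s) + Σ_{j ∈ N_{m−s} ∩ s} n_j` for all `λ` and `s`. This fails at a rank-deficient
`(λ, s)` with `N_{m−s} ∩ s = ∅`; conversely a rank-deficient `λ` lies in `σ(A)`, and then any
`j ∈ N_{m−s} ∩ s` contributes `n_j ≥ n − rank P(λ, s)` by the lower bound on the integrators.
-/

theorem Submodule.finrank_prod {K M M' : Type*} [DivisionRing K] [AddCommGroup M] [AddCommGroup M']
    [Module K M] [Module K M'] [FiniteDimensional K M] [FiniteDimensional K M']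
    (p : Submodule K M) (r : Submodule K M') :
    Module.finrank K (p.prod r) = Module.finrank K p + Module.finrank K r := by
  have hinj : Function.Injective (p.subtype.prodMap r.subtype) :=
    p.injective_subtype.prodMap r.injective_subtype
  rw [← Module.finrank_prod, ← LinearMap.finrank_range_of_inj hinj, LinearMap.range_prodMap,
    Submodule.range_subtype, Submodule.range_subtype]

namespace Matrix

variable {K : Type*} [Field K] {α β α' β' : Type*} [Fintype α] [Fintype β] [Fintype α'] [Fintype β']

theorem rank_fromBlocks_zero_zero (A : Matrix α β K) (D : Matrix α' β' K) :
    (fromBlocks A 0 0 D).rank = A.rank + D.rank := by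
  set e₁ := LinearEquiv.sumArrowLequivProdArrow α α' K K
  set e₂ := LinearEquiv.sumArrowLequivProdArrow β β' K K
  have key : (fromBlocks A 0 0 D).mulVecLin =
      e₁.symm.toLinearMap ∘ₗ (A.mulVecLin.prodMap D.mulVecLin) ∘ₗ e₂.toLinearMap := by
    ext x i
    cases i <;> simp [e₁, e₂, fromBlocks_mulVec, LinearEquiv.sumArrowLequivProdArrow,
      Equiv.sumArrowEquivProdArrow]
  rw [rank, key, LinearMap.range_comp, LinearMap.range_comp_of_range_eq_top _ e₂.range,
    LinearEquiv.finrank_map_eq, LinearMap.range_prodMap, Submodule.finrank_prod, rank, rank]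

theorem rank_fromBlocks_zero₁₁_zero₂₂ (B : Matrix α β' K) (C : Matrix α' β K) :
    (fromBlocks 0 B C 0).rank = B.rank + C.rank := by
  have := rank_submatrix (fromBlocks 0 B C 0) (Equiv.refl _) (Equiv.sumComm β' β)
  rwa [Equiv.coe_refl, Equiv.sumComm_apply, fromBlocks_submatrix_sum_swap_right, submatrix_id_id,
    rank_fromBlocks_zero_zero, eq_comm] at this

theorem rank_fromBlocks_smul_one [DecidableEq α] [DecidableEq α'] (c : K) (D : Matrix α α K)
    (G : Matrix α' α K) (H : Matrix α α' K) (hD : D * D = D) (hHG : H * G = 1 - D) :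
    (fromBlocks (c • 1) D G 0).rank = D.rank + G.rank := by
  set P : Matrix (α ⊕ α') (α ⊕ α') K := fromBlocks 1 (-c • H) 0 1
  set Q : Matrix (α ⊕ α) (α ⊕ α) K := fromBlocks 1 0 (-c • D) 1
  have hclear : P * fromBlocks (c • 1) D G 0 * Q = fromBlocks 0 D G 0 := by
    simp only [P, Q, fromBlocks_multiply, Matrix.one_mul, Matrix.mul_one, Matrix.zero_mul,
      Matrix.mul_zero, Matrix.smul_mul, Matrix.mul_smul, hD, hHG, add_zero, zero_add]
    rw [smul_zero, smul_zero, zero_add, add_zero, smul_sub, neg_smul, neg_smul]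
    abel_nf
  rw [← rank_fromBlocks_zero₁₁_zero₂₂, ← hclear, rank_mul_eq_left_of_isUnit_det,
    rank_mul_eq_right_of_isUnit_det]
  · simp [P]
  · simp [Q]

end Matrix

def Equiv.sumSigmaSumRegroup {ι α κ : Type*} (β γ : ι → Type*) :
    (α ⊕ κ) ⊕ (Σ i, β i ⊕ γ i) ≃ (α ⊕ Σ i, β i) ⊕ (κ ⊕ Σ i, γ i) :=
  (Equiv.sumCongr (Equiv.refl _) (Equiv.sigmaSumDistrib β γ)).trans (Equiv.sumSumSumComm _ _ _ _)

section Integrators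

variable {m : ℕ}

theorem Eblk_apply (nd : Fin m → ℕ) (i : Fin m) (r : Σ j, Fin (nd j)) (c : Fin (nd i)) :
    Eblk nd i r c = if r = ⟨i, c⟩ then 1 else 0 := by
  rcases r with ⟨j, x⟩
  rcases eq_or_ne j i with rfl | h
  · simp [Eblk]
  · simp [Eblk, h]

theorem Esel_eq_diagonal (nd : Fin m → ℕ) (t : Finset (Fin m)) :
    Esel nd t = diagonal fun k => if k.1 ∈ t then 1 else 0 := by
  ext r c
  rcases eq_or_ne r c with rfl | h
  · simp [Esel]
  · simp [Esel, h]

theorem Esel_mul_self (nd : Fin m → ℕ) (t : Finset (Fin m)) :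
    Esel nd t * Esel nd t = Esel nd t := by
  simp [Esel_eq_diagonal]

theorem rank_Esel (nd : Fin m → ℕ) (t : Finset (Fin m)) :
    (Esel nd t).rank = ∑ j ∈ t, nd j := by
  rw [Esel_eq_diagonal, rank_diagonal,
    Fintype.card_of_subtype (t.sigma fun _ => Finset.univ) (by simp), Finset.card_sigma]
  simp

/-- The stacked selectors `E_{N_i}'` of the channels `i ∉ s`, with the rows of the channels
`i ∈ s` zeroed as in `pencil`. -/
def neighborSel (nd : Fin m → ℕ) (N : Fin m → Finset (Fin m)) (s : Finset (Fin m)) :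
    Matrix (Σ _i : Fin m, Σ j, Fin (nd j)) (Σ j, Fin (nd j)) ℂ :=
  of fun r c => if r.1 ∈ s then 0 else Esel nd (N r.1) r.2 c

theorem rank_neighborSel (nd : Fin m → ℕ) (N : Fin m → Finset (Fin m)) (s : Finset (Fin m)) :
    (neighborSel nd N s).rank = ∑ j ∈ sᶜ.biUnion N, nd j := by
  rw [← rank_Esel]
  apply le_antisymm
  · have h : neighborSel nd N s * Esel nd (sᶜ.biUnion N) = neighborSel nd N s := by
      ext r c
      rw [Esel_eq_diagonal, mul_diagonal]
      by_cases hc : c.1 ∈ sᶜ.biUnion N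
      · simp [hc]
      · have : neighborSel nd N s r c = 0 := by
          simp only [neighborSel, Esel, of_apply]
          split_ifs with hr h <;> try rfl
          exact absurd (Finset.mem_biUnion.2 ⟨r.1, Finset.mem_compl.2 hr, h.1 ▸ h.2⟩) hc
        simp [this]
    rw [← h]
    exact rank_mul_le_right _ _
  · -- `w j ∉ s` observes `j` when `j ∈ N_{m−s}`; for other `j` the selected rows vanish anyway.
    let w : Fin m → Fin m := fun j =>
      if h : j ∈ sᶜ.biUnion N then (Finset.mem_biUnion.1 h).choose else j
    have h : (neighborSel nd N s).submatrix (fun k => ⟨w k.1, k⟩) id = Esel nd (sᶜ.biUnion N) := by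
      ext r c
      simp only [submatrix_apply, id, neighborSel, Esel, of_apply]
      by_cases hr : r.1 ∈ sᶜ.biUnion N
      · obtain ⟨hws, hwN⟩ : w r.1 ∉ s ∧ r.1 ∈ N (w r.1) := by
          simp only [w, dif_pos hr]
          simpa using (Finset.mem_biUnion.1 hr).choose_spec
        simp [hws, hwN, hr]
      · have : ¬ (w r.1 ∉ s ∧ r.1 ∈ N (w r.1)) := fun h =>
          hr (Finset.mem_biUnion.2 ⟨w r.1, Finset.mem_compl.2 h.1, h.2⟩)
        simp only [hr, and_false, if_false]
        split_ifs <;> tauto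
    rw [← h]
    exact rank_submatrix_le _ _ _

/-- `[λI, E_s; E_{N_{m−s}}', 0]`: the rows and columns of `extPencil` belonging to the
integrator states. -/
def intPencil (nd : Fin m → ℕ) (N : Fin m → Finset (Fin m)) (lam : ℂ) (s : Finset (Fin m)) :
    Matrix ((Σ j, Fin (nd j)) ⊕ Σ _i : Fin m, Σ j, Fin (nd j))
      ((Σ j, Fin (nd j)) ⊕ Σ j, Fin (nd j)) ℂ :=
  fromBlocks (lam • 1) (Esel nd s) (neighborSel nd N s) 0

theorem rank_intPencil (nd : Fin m → ℕ) (N : Fin m → Finset (Fin m)) (hself : ∀ i, i ∈ N i)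
    (lam : ℂ) (s : Finset (Fin m)) :
    (intPencil nd N lam s).rank = ∑ i, nd i + ∑ j ∈ sᶜ.biUnion N ∩ s, nd j := by
  -- `H` reads the state `k` of a channel `k.1 ∉ s` off that channel's own selector `E_{N_{k.1}}'`.
  let H : Matrix (Σ j, Fin (nd j)) (Σ _i : Fin m, Σ j, Fin (nd j)) ℂ :=
    of fun k r => if r = ⟨k.1, k⟩ ∧ k.1 ∉ s then 1 else 0
  have hHG : H * neighborSel nd N s = 1 - Esel nd s := by
    ext k c
    rw [mul_apply, Finset.sum_eq_single ⟨k.1, k⟩ (fun r _ hr => by simp [H, hr]) (by simp)]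
    by_cases hk : k.1 ∈ s <;> simp [H, neighborSel, Esel, one_apply, hk, hself]
  have hcover : sᶜ.biUnion N ∪ s = Finset.univ := by
    refine Finset.eq_univ_of_forall fun j => ?_
    by_cases hj : j ∈ s
    · exact Finset.mem_union_right _ hj
    · exact Finset.mem_union_left _ (Finset.mem_biUnion.2 ⟨j, Finset.mem_compl.2 hj, hself j⟩)
  rw [intPencil, rank_fromBlocks_smul_one _ _ _ H (Esel_mul_self nd s) hHG, rank_Esel,
    rank_neighborSel, add_comm, ← Finset.sum_union_inter, hcover]

end Integrators

section ExtendedPencil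

variable {n m : ℕ}

theorem extPencil_eq_submatrix (p q nd : Fin m → ℕ) (A : Matrix (Fin n) (Fin n) ℝ)
    (B : ∀ i, Matrix (Fin n) (Fin (p i)) ℝ) (C : ∀ i, Matrix (Fin (q i)) (Fin n) ℝ)
    (N : Fin m → Finset (Fin m)) (lam : ℂ) (s : Finset (Fin m)) :
    extPencil p q nd A B C N lam s =
      (fromBlocks (pencil p q A B C lam s) 0 0 (intPencil nd N lam s)).submatrix
        (Equiv.sumSigmaSumRegroup _ _) (Equiv.sumSigmaSumRegroup _ _) := by
  ext r c
  rcases r with (x | k) | ⟨i, x | k⟩ <;> rcases c with (y | k') | ⟨i', y | k'⟩ <;>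
    simp [extPencil, pencil, intPencil, neighborSel, Abar, Bbar, Cbar, Equiv.sumSigmaSumRegroup,
      Eblk_apply, Esel, one_apply, fromBlocks, of_apply]
  rcases eq_or_ne k ⟨i', k'⟩ with rfl | hk <;> simp [*]

theorem rank_extPencil (p q nd : Fin m → ℕ) (A : Matrix (Fin n) (Fin n) ℝ)
    (B : ∀ i, Matrix (Fin n) (Fin (p i)) ℝ) (C : ∀ i, Matrix (Fin (q i)) (Fin n) ℝ)
    (N : Fin m → Finset (Fin m)) (hself : ∀ i, i ∈ N i) (lam : ℂ) (s : Finset (Fin m)) :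
    (extPencil p q nd A B C N lam s).rank =
      (pencil p q A B C lam s).rank + (∑ i, nd i + ∑ j ∈ sᶜ.biUnion N ∩ s, nd j) := by
  rw [extPencil_eq_submatrix, rank_submatrix, rank_fromBlocks_zero_zero,
    rank_intPencil nd N hself]

theorem le_rank_pencil_of_notMem_spectrum (p q : Fin m → ℕ) (A : Matrix (Fin n) (Fin n) ℝ)
    (B : ∀ i, Matrix (Fin n) (Fin (p i)) ℝ) (C : ∀ i, Matrix (Fin (q i)) (Fin n) ℝ)
    {lam : ℂ} (hlam : lam ∉ spectrum ℂ (A.map ofReal)) (s : Finset (Fin m)) :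
    n ≤ (pencil p q A B C lam s).rank := by
  rw [spectrum.notMem_iff, Algebra.algebraMap_eq_smul_one] at hlam
  have hblock : (pencil p q A B C lam s).submatrix Sum.inl Sum.inl = lam • 1 - A.map ofReal := rfl
  calc n = (lam • 1 - A.map ofReal).rank := by rw [rank_of_isUnit _ hlam, Fintype.card_fin]
    _ ≤ (pencil p q A B C lam s).rank := hblock ▸ rank_submatrix_le _ _ _

end ExtendedPencil

theorem stmt11_general {n m : ℕ} (p q nd : Fin m → ℕ)
    (A : Matrix (Fin n) (Fin n) ℝ)
    (B : ∀ i, Matrix (Fin n) (Fin (p i)) ℝ)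
    (C : ∀ i, Matrix (Fin (q i)) (Fin n) ℝ)
    (N : Fin m → Finset (Fin m))
    (hself : ∀ i, i ∈ N i)
    -- n_i ≥ n − min_{s, λ ∈ σ(A)} rank [λI − A, B_s; C_{m−s}, 0]
    (hbound : ∀ i, ∀ (s : Finset (Fin m)) (lam : ℂ),
      lam ∈ spectrum ℂ (A.map Complex.ofReal) →
      n - (pencil p q A B C lam s).rank ≤ nd i) :
    (∀ (lam : ℂ) (s : Finset (Fin m)),
        n + ∑ i, nd i ≤ (extPencil p q nd A B C N lam s).rank) ↔
      ∀ s : Finset (Fin m),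
        (∃ lam ∈ spectrum ℂ (A.map Complex.ofReal),
          (pencil p q A B C lam s).rank < n) →
        (((sᶜ).biUnion N) ∩ s).Nonempty := by
  simp only [rank_extPencil p q nd A B C N hself]
  constructor
  · rintro h s ⟨lam, -, hdef⟩
    rw [Finset.nonempty_iff_ne_empty]
    intro hdisj
    have := h lam s
    rw [hdisj, Finset.sum_empty] at this
    omega
  · intro h lam s
    by_cases hlam : lam ∈ spectrum ℂ (A.map ofReal)
    · by_cases hdef : (pencil p q A B C lam s).rank < n
      · obtain ⟨j, hj⟩ := h s ⟨lam, hlam, hdef⟩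
        have hj_le : nd j ≤ ∑ j ∈ sᶜ.biUnion N ∩ s, nd j :=
          Finset.single_le_sum (fun _ _ => Nat.zero_le _) hj
        have := hbound j s lam hlam
        omega
      · omega
    · have := le_rank_pencil_of_notMem_spectrum p q A B C hlam s
      omega

/-- For a jointly controllable, jointly observable system with a weakly
connected neighbor graph and local integrators of dimensions satisfying the
lower bound, the extended system has no fixed spectrum if and only if
`N_{m−s} ∩ s ≠ ∅` for every subset `s` at which the fixed-mode pencil of the
original system is rank deficient for some `λ ∈ σ(A)`. -/
theorem stmt11 {n m : ℕ} (p q nd : Fin m → ℕ)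
    (A : Matrix (Fin n) (Fin n) ℝ)
    (B : ∀ i, Matrix (Fin n) (Fin (p i)) ℝ)
    (C : ∀ i, Matrix (Fin (q i)) (Fin n) ℝ)
    (N : Fin m → Finset (Fin m))
    (hself : ∀ i, i ∈ N i)
    -- weakly connected neighbor graph
    (hwc : ∀ i j, Relation.ReflTransGen (fun a b => a ∈ N b ∨ b ∈ N a) i j)
    -- joint controllability: rank [λI − A, B] = n for all λ
    (hctrb : ∀ lam : ℂ, (pencil p q A B C lam Finset.univ).rank = n)
    -- joint observability: rank [λI − A; C] = n for all λ
    (hobs : ∀ lam : ℂ, (pencil p q A B C lam ∅).rank = n)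
    -- n_i ≥ n − min_{s, λ ∈ σ(A)} rank [λI − A, B_s; C_{m−s}, 0]
    (hbound : ∀ i, ∀ (s : Finset (Fin m)) (lam : ℂ),
      lam ∈ spectrum ℂ (A.map Complex.ofReal) →
      n - (pencil p q A B C lam s).rank ≤ nd i) :
    (∀ (lam : ℂ) (s : Finset (Fin m)),
        n + ∑ i, nd i ≤ (extPencil p q nd A B C N lam s).rank) ↔
      ∀ s : Finset (Fin m),
        (∃ lam ∈ spectrum ℂ (A.map Complex.ofReal),
          (pencil p q A B C lam s).rank < n) →
        (((sᶜ).biUnion N) ∩ s).Nonempty :=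
  stmt11_general p q nd A B C N hself hbound
end

section
/- With state holding (every agent i delays its state z_i by exactly d_i steps so that all followers of i, including i itself, measure z_i(t − d_i)), the lifted extended system {Â, B̂_i, Ĉ_i; m} of dimension n̂ = n + Σ_i(d_i+1)n_i satisfies, for every λ ∈ ℂ and every subset s ⊆ {1,...,m}: rank [λI − Â, B̂_s; Ĉ_{m−s}, 0] = rank [λI_n − A, B_s; C_{m−s}, 0] + Σ_{i=1}^m (d_i+1)n_i + Σ_{i ∈ N_{m−s} ∩ s} n_i. -/
open Matrix Complex

noncomputable section

variable {n m : ℕ}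

/-- Index type of the lifted shift registers: agent `j` stores
`z_j(t), z_j(t−1), ..., z_j(t−D j)`. -/
abbrev LiftZ (nd D : Fin m → ℕ) := Σ j : Fin m, Fin (D j + 1) × Fin (nd j)

/-- The lifted `Ã`: block diagonal with `A` and the shift registers. -/
def Alift (nd D : Fin m → ℕ) (A : Matrix (Fin n) (Fin n) ℝ) :
    Matrix (Fin n ⊕ LiftZ nd D) (Fin n ⊕ LiftZ nd D) ℂ :=
  fromBlocks (A.map ofReal) 0 0
    (fun r c =>
      if h : r.1 = c.1 then
        (if (r.2.1 : ℕ) = (c.2.1 : ℕ) + 1 ∧ h ▸ r.2.2 = c.2.2 then 1 else 0)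
      else 0)

/-- The lifted `B̃_i`: injects `u_i` into the plant and `v_i` into the head of
agent `i`'s shift register. -/
def Blift (p nd D : Fin m → ℕ) (B : ∀ i, Matrix (Fin n) (Fin (p i)) ℝ) (i : Fin m) :
    Matrix (Fin n ⊕ LiftZ nd D) (Fin (p i) ⊕ Fin (nd i)) ℂ :=
  fromBlocks ((B i).map ofReal) 0 0
    (fun r c =>
      if h : r.1 = i then
        (if (r.2.1 : ℕ) = 0 ∧ h ▸ r.2.2 = c then 1 else 0)
      else 0)

/-- The lifted `C̃_i`: outputs `y_i = C_i x` together with, for each neighbor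
`j ∈ N i`, the delayed state `z_j(t − del j i)` (register `del j i` in agent
`j`'s shift chain). -/
def Clift (q nd D : Fin m → ℕ) (C : ∀ i, Matrix (Fin (q i)) (Fin n) ℝ)
    (N : Fin m → Finset (Fin m)) (del : Fin m → Fin m → ℕ) (i : Fin m) :
    Matrix (Fin (q i) ⊕ Σ j, Fin (nd j)) (Fin n ⊕ LiftZ nd D) ℂ :=
  fromBlocks ((C i).map ofReal) 0 0
    (fun r c =>
      if h : c.1 = r.1 then
        (if r.1 ∈ N i ∧ (c.2.1 : ℕ) = del r.1 i ∧ r.2 = h ▸ c.2.2 then 1 else 0)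
      else 0)

/-- Fixed-mode pencil of the lifted extended system. -/
def liftPencil (p q nd D : Fin m → ℕ)
    (A : Matrix (Fin n) (Fin n) ℝ)
    (B : ∀ i, Matrix (Fin n) (Fin (p i)) ℝ)
    (C : ∀ i, Matrix (Fin (q i)) (Fin n) ℝ)
    (N : Fin m → Finset (Fin m)) (del : Fin m → Fin m → ℕ)
    (lam : ℂ) (s : Finset (Fin m)) :
    Matrix ((Fin n ⊕ LiftZ nd D) ⊕ Σ i, (Fin (q i) ⊕ Σ j, Fin (nd j)))
      ((Fin n ⊕ LiftZ nd D) ⊕ Σ i, (Fin (p i) ⊕ Fin (nd i))) ℂ :=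
  fromBlocks (lam • 1 - Alift nd D A)
    (fun r c => if c.1 ∈ s then Blift p nd D B c.1 r c.2 else 0)
    (fun r c => if r.1 ∈ s then 0 else Clift q nd D C N del r.1 r.2 c)
    0

end


open Module

/-!
Permuting rows and columns splits the lifted pencil into the original pencil and one block
per state component `(j, a)`: the shift register of that coordinate of `z_j`, i.e. the lower
bidiagonal `λI − S` of size `D j + 1`, together with the input column `e₀` (present iff
`j ∈ s`) and a measurement row `e_{D j}ᵀ` for every agent `i ∉ s` with `j ∈ N i`.
In the kernel of such a block every register entry is determined by the last one,
`x_k = λ^(D j − k) x_{D j}`, so its nullity is `0` when both the input and a measurement are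
present and `1` otherwise. Hence the block has rank `D j + 1`, plus one exactly when
`j ∈ N_{m−s} ∩ s`. Every block has an input or a measurement, as each agent measures its
own state.
-/

section BlockRank

variable {K V₁ V₂ W₁ W₂ : Type*} [Field K] [AddCommGroup V₁] [Module K V₁] [AddCommGroup V₂]
  [Module K V₂] [AddCommGroup W₁] [Module K W₁] [AddCommGroup W₂] [Module K W₂]

theorem LinearMap.finrank_range_equiv_comp_comp_equiv (e₁ : W₁ ≃ₗ[K] W₂) (f : V₁ →ₗ[K] W₁)
    (e₂ : V₂ ≃ₗ[K] V₁) :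
    finrank K (e₁.toLinearMap ∘ₗ f ∘ₗ e₂.toLinearMap).range = finrank K f.range := by
  rw [LinearMap.range_comp, LinearMap.range_comp_of_range_eq_top _ e₂.range,
    LinearEquiv.finrank_map_eq]

theorem LinearMap.finrank_range_prodMap [FiniteDimensional K V₁] [FiniteDimensional K V₂]
    (f : V₁ →ₗ[K] W₁) (g : V₂ →ₗ[K] W₂) :
    finrank K (f.prodMap g).range = finrank K f.range + finrank K g.range := by
  have hfac : f.prodMap g = (f.range.subtype.prodMap g.range.subtype) ∘ₗ
      (f.rangeRestrict.prodMap g.rangeRestrict) := by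
    rw [LinearMap.prodMap_comp]; rfl
  rw [hfac, LinearMap.range_comp_of_range_eq_top _ (by
      rw [LinearMap.range_prodMap, LinearMap.range_rangeRestrict, LinearMap.range_rangeRestrict,
        Submodule.prod_top]),
    LinearMap.finrank_range_of_inj ((Submodule.injective_subtype _).prodMap
      (Submodule.injective_subtype _)), finrank_prod]

theorem LinearMap.finrank_range_piMap {ι : Type*} [Fintype ι] {V W : ι → Type*}
    [∀ i, AddCommGroup (V i)] [∀ i, Module K (V i)] [∀ i, AddCommGroup (W i)]
    [∀ i, Module K (W i)] [∀ i, FiniteDimensional K (V i)] (f : ∀ i, V i →ₗ[K] W i) :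
    finrank K (LinearMap.piMap f).range = ∑ i, finrank K (f i).range := by
  have hfac : LinearMap.piMap f = (LinearMap.piMap fun i => (f i).range.subtype) ∘ₗ
      (LinearMap.piMap fun i => (f i).rangeRestrict) := by
    ext; rfl
  rw [hfac, LinearMap.range_comp_of_range_eq_top _ (by
      rw [LinearMap.range_eq_top]
      exact Function.Surjective.piMap fun i => (f i).surjective_rangeRestrict),
    LinearMap.finrank_range_of_inj (Function.Injective.piMap fun i =>
      Submodule.injective_subtype _), finrank_pi_fintype]

theorem Matrix.rank_fromBlocks_zero_zero_s17 {l m n o : Type*} [Fintype m] [Fintype o]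
    (A : Matrix l m K) (D : Matrix n o K) :
    (fromBlocks A 0 0 D).rank = A.rank + D.rank := by
  have h : (fromBlocks A 0 0 D).mulVecLin =
      (LinearEquiv.sumArrowLequivProdArrow l n K K).symm.toLinearMap ∘ₗ
        (A.mulVecLin.prodMap D.mulVecLin) ∘ₗ
          (LinearEquiv.sumArrowLequivProdArrow m o K K).toLinearMap := by
    ext x (i | i) <;>
      simp only [mulVecLin_apply, fromBlocks_mulVec, zero_mulVec, add_zero, zero_add,
        Sum.elim_inl, Sum.elim_inr, LinearMap.coe_comp, LinearEquiv.coe_coe, Function.comp_apply,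
        LinearMap.prodMap_apply, LinearEquiv.sumArrowLequivProdArrow_symm_apply_inl,
        LinearEquiv.sumArrowLequivProdArrow_symm_apply_inr] <;> rfl
  rw [Matrix.rank, h, LinearMap.finrank_range_equiv_comp_comp_equiv,
    LinearMap.finrank_range_prodMap]
  rfl

theorem Matrix.rank_blockDiagonal' {ι : Type*} [Fintype ι] [DecidableEq ι] {m' n' : ι → Type*}
    [∀ i, Fintype (n' i)] (M : ∀ i, Matrix (m' i) (n' i) K) :
    (blockDiagonal' M).rank = ∑ i, (M i).rank := by
  have h : (blockDiagonal' M).mulVecLin =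
      (LinearEquiv.piCurry K fun i (_ : m' i) => K).symm.toLinearMap ∘ₗ
        (LinearMap.piMap fun i => (M i).mulVecLin) ∘ₗ
          (LinearEquiv.piCurry K fun i (_ : n' i) => K).toLinearMap := by
    ext x ⟨i, a⟩
    simp only [mulVecLin_apply, mulVec, dotProduct, blockDiagonal'_apply, dite_mul, zero_mul,
      Fintype.sum_sigma, Finset.sum_dite_irrel, Finset.sum_const_zero, Finset.sum_dite_eq,
      Finset.mem_univ, ↓reduceIte, cast_eq, LinearMap.coe_comp, LinearEquiv.coe_coe,
      LinearMap.coe_piMap, Function.comp_apply, LinearEquiv.piCurry_apply,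
      LinearEquiv.piCurry_symm_apply]
    rfl
  rw [Matrix.rank, h, LinearMap.finrank_range_equiv_comp_comp_equiv,
    LinearMap.finrank_range_piMap]
  rfl

end BlockRank

section Chain

variable {K : Type*} [Field K] {ι : Type*}

/-- `[λI − S, β e₀; o e_dᵀ, 0]`, with `S` the down-shift of `K^(d+1)`. -/
def chainPencil (d : ℕ) (lam β : K) (o : ι → K) :
    Matrix (Fin (d + 1) ⊕ ι) (Fin (d + 1) ⊕ Unit) K :=
  fromBlocks (of fun k k' => (if k = k' then lam else 0) - if (k : ℕ) = k' + 1 then 1 else 0)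
    (of fun k _ => if (k : ℕ) = 0 then β else 0)
    (of fun i k => if (k : ℕ) = d then o i else 0) 0

variable {d : ℕ} {lam β : K} {o : ι → K} (x : Fin (d + 1) ⊕ Unit → K)

theorem chainPencil_mulVec_inl_zero :
    (chainPencil d lam β o *ᵥ x) (.inl 0) = lam * x (.inl 0) + β * x (.inr ()) := by
  simp [chainPencil, mulVec, dotProduct, Fintype.sum_sum_type]

theorem chainPencil_mulVec_inl_succ (k : Fin d) :
    (chainPencil d lam β o *ᵥ x) (.inl k.succ) = lam * x (.inl k.succ) - x (.inl k.castSucc) := by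
  simp only [mulVec, dotProduct, chainPencil, Fintype.sum_sum_type, fromBlocks_apply₁₁,
    fromBlocks_apply₁₂, of_apply, Fin.val_succ, Nat.add_right_cancel_iff, sub_mul, ite_mul,
    zero_mul, one_mul, Finset.sum_sub_distrib, Finset.sum_ite_eq, Finset.mem_univ, ↓reduceIte,
    Finset.univ_unique, Nat.add_eq_zero_iff, one_ne_zero, and_false, Finset.sum_const_zero,
    add_zero, sub_right_inj]
  rw [Fintype.sum_eq_single k.castSucc fun k' hk' => if_neg fun h => hk' (Fin.ext h.symm)]
  simp

theorem chainPencil_mulVec_inr (i : ι) :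
    (chainPencil d lam β o *ᵥ x) (.inr i) = o i * x (.inl (Fin.last d)) := by
  simp only [mulVec, dotProduct, chainPencil, Fintype.sum_sum_type, fromBlocks_apply₂₁,
    fromBlocks_apply₂₂, of_apply, ite_mul, zero_mul, Matrix.zero_apply, Finset.sum_const_zero,
    add_zero]
  rw [Fintype.sum_eq_single (Fin.last d) fun k hk =>
    if_neg fun h => hk (Fin.ext (h.trans (Fin.val_last d).symm))]
  simp

theorem chainPencil_mulVec_eq_zero_inl_eq_pow (h : chainPencil d lam β o *ᵥ x = 0)
    (k : Fin (d + 1)) : x (.inl k) = lam ^ (d - k) * x (.inl (Fin.last d)) := by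
  induction k using Fin.reverseInduction with
  | last => simp
  | cast k ih =>
    have hrow := congrFun h (.inl k.succ)
    rw [chainPencil_mulVec_inl_succ, Pi.zero_apply, sub_eq_zero] at hrow
    rw [← hrow, ih, ← mul_assoc, ← pow_succ', Fin.val_succ, Fin.val_castSucc]
    congr 2
    omega

theorem chainPencil_mulVec_eq_zero_iff :
    chainPencil d lam β o *ᵥ x = 0 ↔
      (∀ k : Fin (d + 1), x (.inl k) = lam ^ (d - k) * x (.inl (Fin.last d))) ∧
        lam ^ (d + 1) * x (.inl (Fin.last d)) + β * x (.inr ()) = 0 ∧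
        ∀ i, o i * x (.inl (Fin.last d)) = 0 := by
  constructor
  · intro h
    have hpow := chainPencil_mulVec_eq_zero_inl_eq_pow x h
    refine ⟨hpow, ?_, fun i => by simpa [chainPencil_mulVec_inr] using congrFun h (.inr i)⟩
    simpa [chainPencil_mulVec_inl_zero, hpow 0, ← mul_assoc, ← pow_succ'] using
      congrFun h (.inl 0)
  · rintro ⟨hpow, hzero, hobs⟩
    ext (k | i)
    · cases k using Fin.cases with
      | zero => simpa [chainPencil_mulVec_inl_zero, hpow 0, ← mul_assoc, ← pow_succ'] using hzero
      | succ k =>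
        rw [chainPencil_mulVec_inl_succ, hpow k.succ, hpow k.castSucc, ← mul_assoc, ← pow_succ',
          Pi.zero_apply, sub_eq_zero, Fin.val_succ, Fin.val_castSucc]
        congr 2
        omega
    · rw [chainPencil_mulVec_inr, hobs, Pi.zero_apply]

theorem chainPencil_mulVec_eq_zero_inl (ho : o ≠ 0) (hx : chainPencil d lam β o *ᵥ x = 0)
    (k : Fin (d + 1)) : x (.inl k) = 0 := by
  obtain ⟨i, hi⟩ := Function.ne_iff.mp ho
  obtain ⟨hk, -, hobs⟩ := (chainPencil_mulVec_eq_zero_iff x).mp hx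
  rw [hk, (mul_eq_zero.mp (hobs i)).resolve_left hi, mul_zero]

theorem ker_chainPencil_eq_bot (hβ : β ≠ 0) (ho : o ≠ 0) :
    LinearMap.ker (chainPencil d lam β o).mulVecLin = ⊥ := by
  refine eq_bot_iff.mpr fun x hx => ?_
  rw [LinearMap.mem_ker, mulVecLin_apply] at hx
  have hregs := chainPencil_mulVec_eq_zero_inl x ho hx
  obtain ⟨-, hu, -⟩ := (chainPencil_mulVec_eq_zero_iff x).mp hx
  rw [hregs, mul_zero, zero_add, mul_eq_zero, or_iff_right hβ] at hu
  ext (k | ⟨⟩)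
  exacts [hregs k, hu]

theorem ker_chainPencil_of_input_eq_zero (ho : o ≠ 0) :
    LinearMap.ker (chainPencil d lam 0 o).mulVecLin = K ∙ Pi.single (.inr ()) 1 := by
  ext x
  rw [LinearMap.mem_ker, mulVecLin_apply, Submodule.mem_span_singleton]
  constructor
  · intro hx
    refine ⟨x (.inr ()), ?_⟩
    ext (k | ⟨⟩)
    · simp [chainPencil_mulVec_eq_zero_inl x ho hx k]
    · simp
  · rintro ⟨c, rfl⟩
    rw [chainPencil_mulVec_eq_zero_iff]
    simp

theorem ker_chainPencil_of_obs_eq_zero (hβ : β ≠ 0) :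
    LinearMap.ker (chainPencil d lam β (0 : ι → K)).mulVecLin =
      K ∙ Sum.elim (fun k : Fin (d + 1) => lam ^ (d - k)) fun _ => -(lam ^ (d + 1) / β) := by
  ext x
  rw [LinearMap.mem_ker, mulVecLin_apply, chainPencil_mulVec_eq_zero_iff,
    Submodule.mem_span_singleton]
  constructor
  · rintro ⟨hk, hu, -⟩
    refine ⟨x (.inl (Fin.last d)), ?_⟩
    ext (k | ⟨⟩)
    · simp [hk k, mul_comm]
    · simp only [Sum.elim_inr, Pi.smul_apply, smul_eq_mul]
      field_simp
      linear_combination -hu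
  · rintro ⟨c, rfl⟩
    refine ⟨fun k => by simp [mul_comm], ?_, by simp⟩
    simp only [Pi.smul_apply, Sum.elim_inl, Sum.elim_inr, smul_eq_mul, Fin.val_last, Nat.sub_self,
      pow_zero, mul_one]
    field_simp
    ring

variable [Fintype ι]

open scoped Classical in
theorem finrank_ker_chainPencil (h : β ≠ 0 ∨ o ≠ 0) :
    finrank K (LinearMap.ker (chainPencil d lam β o).mulVecLin) =
      if β ≠ 0 ∧ o ≠ 0 then 0 else 1 := by
  split_ifs with hβo
  · rw [ker_chainPencil_eq_bot hβo.1 hβo.2, finrank_bot]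
  · rcases not_and_or.mp hβo with hβ | ho
    · rw [not_not.mp hβ, ker_chainPencil_of_input_eq_zero (h.resolve_left hβ),
        finrank_span_singleton (by simp)]
    · rw [not_not.mp ho, ker_chainPencil_of_obs_eq_zero (h.resolve_right ho),
        finrank_span_singleton fun hv => by simpa using congrFun hv (.inl (Fin.last d))]

open scoped Classical in
theorem rank_chainPencil (h : β ≠ 0 ∨ o ≠ 0) :
    (chainPencil d lam β o).rank = d + 1 + if β ≠ 0 ∧ o ≠ 0 then 1 else 0 := by
  have hrn := LinearMap.finrank_range_add_finrank_ker (chainPencil d lam β o).mulVecLin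
  rw [finrank_ker_chainPencil h, Module.finrank_fintype_fun_eq_card, Fintype.card_sum,
    Fintype.card_fin, Fintype.card_unit] at hrn
  rw [rank]
  split_ifs at hrn ⊢ <;> omega

end Chain

section Lift

variable {n m : ℕ}

def liftRowEquiv (q nd D : Fin m → ℕ) :
    (Fin n ⊕ Σ i, Fin (q i)) ⊕ (Σ x : Σ j, Fin (nd j), Fin (D x.1 + 1) ⊕ Fin m) ≃
      (Fin n ⊕ LiftZ nd D) ⊕ Σ i, (Fin (q i) ⊕ Σ j, Fin (nd j)) where
  toFun
    | .inl (.inl a) => .inl (.inl a)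
    | .inl (.inr ⟨i, y⟩) => .inr ⟨i, .inl y⟩
    | .inr ⟨⟨j, a⟩, .inl k⟩ => .inl (.inr ⟨j, (k, a)⟩)
    | .inr ⟨⟨j, a⟩, .inr i⟩ => .inr ⟨i, .inr ⟨j, a⟩⟩
  invFun
    | .inl (.inl a) => .inl (.inl a)
    | .inl (.inr ⟨j, (k, a)⟩) => .inr ⟨⟨j, a⟩, .inl k⟩
    | .inr ⟨i, .inl y⟩ => .inl (.inr ⟨i, y⟩)
    | .inr ⟨i, .inr ⟨j, a⟩⟩ => .inr ⟨⟨j, a⟩, .inr i⟩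
  left_inv := by rintro ((a | ⟨i, y⟩) | ⟨⟨j, a⟩, k | i⟩) <;> rfl
  right_inv := by rintro ((a | ⟨j, k, a⟩) | ⟨i, y | ⟨j, a⟩⟩) <;> rfl

def liftColEquiv (p nd D : Fin m → ℕ) :
    (Fin n ⊕ Σ i, Fin (p i)) ⊕ (Σ x : Σ j, Fin (nd j), Fin (D x.1 + 1) ⊕ Unit) ≃
      (Fin n ⊕ LiftZ nd D) ⊕ Σ i, (Fin (p i) ⊕ Fin (nd i)) where
  toFun
    | .inl (.inl a) => .inl (.inl a)
    | .inl (.inr ⟨i, y⟩) => .inr ⟨i, .inl y⟩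
    | .inr ⟨⟨j, a⟩, .inl k⟩ => .inl (.inr ⟨j, (k, a)⟩)
    | .inr ⟨⟨j, a⟩, .inr ()⟩ => .inr ⟨j, .inr a⟩
  invFun
    | .inl (.inl a) => .inl (.inl a)
    | .inl (.inr ⟨j, (k, a)⟩) => .inr ⟨⟨j, a⟩, .inl k⟩
    | .inr ⟨i, .inl y⟩ => .inl (.inr ⟨i, y⟩)
    | .inr ⟨j, .inr a⟩ => .inr ⟨⟨j, a⟩, .inr ()⟩
  left_inv := by rintro ((a | ⟨i, y⟩) | ⟨⟨j, a⟩, k | ⟨⟩⟩) <;> rfl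
  right_inv := by rintro ((a | ⟨j, k, a⟩) | ⟨i, y | a⟩) <;> rfl

theorem liftPencil_submatrix (p q nd D : Fin m → ℕ) (A : Matrix (Fin n) (Fin n) ℝ)
    (B : ∀ i, Matrix (Fin n) (Fin (p i)) ℝ) (C : ∀ i, Matrix (Fin (q i)) (Fin n) ℝ)
    (N : Fin m → Finset (Fin m)) (lam : ℂ) (s : Finset (Fin m)) :
    (liftPencil p q nd D A B C N (fun j _ => D j) lam s).submatrix
        (liftRowEquiv q nd D) (liftColEquiv p nd D) =
      fromBlocks (pencil p q A B C lam s) 0 0 (blockDiagonal' fun x : Σ j, Fin (nd j) =>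
        chainPencil (D x.1) lam (if x.1 ∈ s then 1 else 0)
          fun i => if i ∉ s ∧ x.1 ∈ N i then 1 else 0) := by
  ext ((a | ⟨i, y⟩) | ⟨⟨j, a⟩, k | i⟩) ((a' | ⟨i', y'⟩) | ⟨⟨j', a'⟩, k' | ⟨⟩⟩)
  all_goals simp only [submatrix_apply, liftRowEquiv, liftColEquiv, Equiv.coe_fn_mk, liftPencil,
    pencil, Alift, Blift, Clift, chainPencil, fromBlocks, blockDiagonal'_apply, of_apply,
    Sum.elim_inl, Sum.elim_inr, Matrix.sub_apply, Matrix.smul_apply, Matrix.zero_apply, one_apply,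
    map_apply, smul_eq_mul, mul_ite, mul_one, mul_zero, sub_self, ite_self, Fin.val_eq_zero_iff,
    Sum.inl.injEq, Sum.inr.injEq, Sigma.mk.injEq, reduceCtorEq, right_eq_dite_iff,
    forall_and_index, ↓reduceIte]
  all_goals
    obtain rfl | hj := eq_or_ne j j'
    · obtain rfl | ha := eq_or_ne a a'
      · simp <;> split_ifs <;> simp_all
      · simp [ha]
    · simp [hj, Ne.symm hj]

theorem rank_chainPencil_agent (N : Fin m → Finset (Fin m)) (hself : ∀ i, i ∈ N i) (d : ℕ)
    (lam : ℂ) (s : Finset (Fin m)) (j : Fin m) :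
    (chainPencil d lam (if j ∈ s then 1 else 0) fun i => if i ∉ s ∧ j ∈ N i then 1 else 0).rank =
      d + 1 + if j ∈ (sᶜ).biUnion N ∩ s then 1 else 0 := by
  have hinput : (if j ∈ s then (1 : ℂ) else 0) ≠ 0 ↔ j ∈ s := by simp
  have hobs : (fun i => if i ∉ s ∧ j ∈ N i then (1 : ℂ) else 0) ≠ 0 ↔ j ∈ (sᶜ).biUnion N := by
    simp [Function.ne_iff]
  have hnondeg : (if j ∈ s then (1 : ℂ) else 0) ≠ 0 ∨
      (fun i => if i ∉ s ∧ j ∈ N i then (1 : ℂ) else 0) ≠ 0 := by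
    by_cases hj : j ∈ s
    · exact Or.inl (hinput.mpr hj)
    · exact Or.inr (hobs.mpr (Finset.mem_biUnion.mpr ⟨j, Finset.mem_compl.mpr hj, hself j⟩))
  rw [rank_chainPencil hnondeg,
    if_congr (show _ ↔ j ∈ (sᶜ).biUnion N ∩ s by rw [hinput, hobs, Finset.mem_inter, and_comm])
      rfl rfl]

end Lift

/-- With state holding (every follower of agent `j`, including `j` itself,
measures the maximally delayed state `z_j(t − D j)`), the lifted extended
pencil satisfies, for every `λ ∈ ℂ` and every channel subset `s`,
`rank [λI − Â, B̂_s; Ĉ_{m−s}, 0]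
  = rank [λI − A, B_s; C_{m−s}, 0] + Σ_i (D i + 1) n_i + Σ_{i ∈ N_{m−s} ∩ s} n_i`. -/
theorem stmt17 {n m : ℕ} (p q nd : Fin m → ℕ)
    (A : Matrix (Fin n) (Fin n) ℝ)
    (B : ∀ i, Matrix (Fin n) (Fin (p i)) ℝ)
    (C : ∀ i, Matrix (Fin (q i)) (Fin n) ℝ)
    (N : Fin m → Finset (Fin m))
    (D : Fin m → ℕ)
    (hself : ∀ i, i ∈ N i) :
    ∀ (lam : ℂ) (s : Finset (Fin m)),
      (liftPencil p q nd D A B C N (fun j _ => D j) lam s).rank =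
        (pencil p q A B C lam s).rank + ∑ i, (D i + 1) * nd i +
          ∑ i ∈ ((sᶜ).biUnion N) ∩ s, nd i := by
  intro lam s
  rw [← rank_submatrix _ (liftRowEquiv q nd D) (liftColEquiv p nd D), liftPencil_submatrix,
    rank_fromBlocks_zero_zero_s17, rank_blockDiagonal', add_assoc]
  -- split the sum first, so that `rank_chainPencil_agent` is instantiated at `j`, not at `x.1`
  simp only [Fintype.sum_sigma]
  simp only [rank_chainPencil_agent N hself, Finset.sum_const, Finset.card_univ, Fintype.card_fin,
    smul_eq_mul, mul_add, mul_ite, mul_one, mul_zero, Finset.sum_add_distrib, Finset.sum_ite_mem,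
    Finset.univ_inter, mul_comm]
end
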